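/- arXiv:2604.10935 — 5 statements merged into one kernel-verified Lean document; each statement's English description precedes it below -/
import Mathlib

section
/- Let Ω be a Stokes domain and x ∈ Ω. Then Re 𝔖_a(φ(t,x)) → +∞ as t → +∞, and φ(t,x) → ∞ as t → +∞. Moreover, for any compact K ⊂ Ω, min_{x∈K} |φ(t,x)| → +∞ as t → +∞. -/
open Filter

/-
`Re 𝔖_a` grows linearly along each trajectory, since `𝔖_a(φ t x) = 𝔖_a x + t`. As `𝔖_a` is
continuous on the closure of `Ω`, it is bounded on every bounded part of `closure Ω`, so a
trajectory along which `Re 𝔖_a` tends to `+∞` must leave every disc. On a compact `K ⊆ Ω`,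
`Re 𝔖_a` is bounded below, which makes the growth, and hence the escape, uniform in `x ∈ K`.
-/

theorem tendsto_norm_atTop_of_continuousOn {ι E : Type*} [NormedAddCommGroup E] [ProperSpace E]
    {C : Set E} {f : E → ℝ} (hC : IsClosed C) (hf : ContinuousOn f C) {l : Filter ι}
    {g : ι → E} (hgC : ∀ᶠ i in l, g i ∈ C) (hfg : Tendsto (fun i => f (g i)) l atTop) :
    Tendsto (fun i => ‖g i‖) l atTop := by
  refine tendsto_atTop.2 fun M => ?_
  have hcompact : IsCompact (C ∩ Metric.closedBall 0 M) :=
    (isCompact_closedBall 0 M).inter_left hC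
  obtain ⟨B, hB⟩ := hcompact.bddAbove_image (hf.mono Set.inter_subset_left)
  filter_upwards [hgC, hfg.eventually_gt_atTop B] with i hiC hiB
  by_contra! hiM
  have hball : g i ∈ Metric.closedBall 0 M := by
    simpa only [Metric.mem_closedBall, dist_zero_right] using hiM.le
  exact (hB ⟨g i, ⟨hiC, hball⟩, rfl⟩).not_gt hiB

theorem stmt4_general (S : ℂ → ℂ) (Ω : Set ℂ) (φ : ℝ → ℂ → ℂ)
    (hScont : ContinuousOn S (closure Ω))
    (hflowin : ∀ x ∈ Ω, ∀ t : ℝ, φ t x ∈ Ω)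
    (hflowS : ∀ x ∈ Ω, ∀ t : ℝ, S (φ t x) = S x + t) :
    (∀ x ∈ Ω, Tendsto (fun t : ℝ => (S (φ t x)).re) atTop atTop) ∧
    (∀ x ∈ Ω, Tendsto (fun t : ℝ => ‖φ t x‖) atTop atTop) ∧
    (∀ K : Set ℂ, K ⊆ Ω → IsCompact K →
      ∀ M : ℝ, ∃ T : ℝ, ∀ t : ℝ, T ≤ t → ∀ x ∈ K, M ≤ ‖φ t x‖) := by
  have hre : ∀ x ∈ Ω, ∀ t : ℝ, (S (φ t x)).re = (S x).re + t := fun x hx t => by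
    simp [hflowS x hx t]
  have hReS : ContinuousOn (fun z => (S z).re) (closure Ω) :=
    Complex.continuous_re.comp_continuousOn hScont
  have hRe : ∀ x ∈ Ω, Tendsto (fun t : ℝ => (S (φ t x)).re) atTop atTop := fun x hx => by
    simp_rw [hre x hx]
    exact tendsto_atTop_add_const_left _ _ tendsto_id
  refine ⟨hRe, fun x hx => ?_, fun K hK hKc M => ?_⟩
  · exact tendsto_norm_atTop_of_continuousOn isClosed_closure hReS
      (Eventually.of_forall fun t => subset_closure (hflowin x hx t)) (hRe x hx)
  · obtain ⟨B, hB⟩ := hKc.bddBelow_image (hReS.mono (hK.trans subset_closure))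
    -- Uniformity in `x ∈ K` is convergence along the filter `atTop ×ˢ 𝓟 K` on pairs `(t, x)`.
    have hK_ev : ∀ᶠ p : ℝ × ℂ in atTop ×ˢ 𝓟 K, p.2 ∈ K :=
      tendsto_snd.eventually (eventually_principal.2 fun _ h => h)
    have hReK : Tendsto (fun p : ℝ × ℂ => (S (φ p.1 p.2)).re) (atTop ×ˢ 𝓟 K) atTop := by
      refine (tendsto_atTop_add_left_of_le' _ (f := fun p : ℝ × ℂ => (S p.2).re) B ?_
        tendsto_fst).congr' ?_
      · filter_upwards [hK_ev] with p hp using hB ⟨p.2, hp, rfl⟩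
      · filter_upwards [hK_ev] with p hp using (hre p.2 (hK hp) p.1).symm
    have hnorm := tendsto_norm_atTop_of_continuousOn isClosed_closure hReS
      (hK_ev.mono fun p hp => subset_closure (hflowin p.2 (hK hp) p.1)) hReK
    exact eventually_atTop.1 (eventually_prod_principal_iff.1 (hnorm.eventually_ge_atTop M))

/-- In a Stokes domain `Ω`, for the global real-time flow `φ` of
`y' = 1/√Q(y)` (satisfying `𝔖_a(φ t x) = 𝔖_a x + t`): `Re 𝔖_a(φ t x) → +∞`,
`φ t x → ∞` as `t → +∞`, and for compact `K ⊆ Ω` the minimum of `|φ t x|`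
over `x ∈ K` tends to `+∞`. -/
theorem stmt4 (Q : Polynomial ℂ) (sq S : ℂ → ℂ) (Ω : Set ℂ) (φ : ℝ → ℂ → ℂ)
    (hΩ : IsOpen Ω) (hQ : ∀ x ∈ Ω, Q.eval x ≠ 0)
    (hsq : ∀ x ∈ Ω, sq x ^ 2 = Q.eval x)
    (hScont : ContinuousOn S (closure Ω))
    (hSd : ∀ x ∈ Ω, HasDerivAt S (sq x) x)
    (hflow0 : ∀ x ∈ Ω, φ 0 x = x)
    (hflowode : ∀ x ∈ Ω, ∀ t : ℝ, HasDerivAt (fun s => φ s x) (1 / sq (φ t x)) t)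
    (hflowin : ∀ x ∈ Ω, ∀ t : ℝ, φ t x ∈ Ω)
    (hflowS : ∀ x ∈ Ω, ∀ t : ℝ, S (φ t x) = S x + t)
    (hflowcont : ∀ t : ℝ, ContinuousOn (fun x => φ t x) Ω) :
    (∀ x ∈ Ω, Tendsto (fun t : ℝ => (S (φ t x)).re) atTop atTop) ∧
    (∀ x ∈ Ω, Tendsto (fun t : ℝ => ‖φ t x‖) atTop atTop) ∧
    (∀ K : Set ℂ, K ⊆ Ω → IsCompact K →
      ∀ M : ℝ, ∃ T : ℝ, ∀ t : ℝ, T ≤ t → ∀ x ∈ K, M ≤ ‖φ t x‖) :=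
  stmt4_general S Ω φ hScont hflowin hflowS
end

section
/- For a compact K in a Stokes domain Ω there is M_K > 0 such that |C(φ(t,x))/Q(φ(t,x))| ≤ M_K/(1+|t|)² for all x ∈ K and all t ∈ ℝ. -/
/-! The bound `‖C/Q‖ ≤ c / (1 + ‖y‖)^(m+2)` at `y = φ(t,x)` is at most `c` for all times, which
handles `|t| ≤ T`. For `|t| ≥ T` the growth `‖φ(t,x)‖ ≥ C_K |t|^(2/(m+2))` turns it into
`c / (C_K^(m+2) |t|^2)`, and `1 + |t| ≤ (1 + 1/T) |t|` converts `|t|^2` into `(1 + |t|)^2`. -/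

open Real

lemma rpow_div_natCast_pow {s : ℝ} (hs : 0 ≤ s) (k : ℕ) {n : ℕ} (hn : n ≠ 0) :
    (s ^ ((k : ℝ) / n)) ^ n = s ^ k := by
  rw [← rpow_natCast, ← rpow_mul hs, div_mul_cancel₀ _ (by exact_mod_cast hn), rpow_natCast]

lemma one_add_le_one_add_inv_mul {T s : ℝ} (hT : 0 < T) (hs : T ≤ s) :
    1 + s ≤ (1 + 1 / T) * s := by
  have : 1 ≤ s / T := (one_le_div hT).mpr hs
  calc 1 + s ≤ s / T + s := by linarith
    _ = (1 + 1 / T) * s := by ring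

section DecayBounds

variable {y c r T t : ℝ} {k n : ℕ}

lemma le_div_one_add_pow_of_abs_le (hc : 0 ≤ c) (hr : 0 ≤ r) (hy : y ≤ c / (1 + r) ^ n)
    (ht : |t| ≤ T) : y ≤ c * (1 + T) ^ k / (1 + |t|) ^ k := by
  have hyc : y ≤ c := hy.trans (div_le_self hc (one_le_pow₀ (by linarith)))
  rw [le_div_iff₀ (by positivity)]
  exact mul_le_mul hyc (pow_le_pow_left₀ (by positivity) (by linarith) k) (by positivity) hc

lemma le_div_one_add_pow_of_growth {a : ℝ} (hn : n ≠ 0) (hc : 0 ≤ c) (ha : 0 < a) (hT : 0 < T)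
    (ht : T ≤ |t|) (hr : a * |t| ^ ((k : ℝ) / n) ≤ r) (hy : y ≤ c / (1 + r) ^ n) :
    y ≤ c * (1 + 1 / T) ^ k / a ^ n / (1 + |t|) ^ k := by
  have ht0 : 0 < |t| := hT.trans_le ht
  have hgrowth : a ^ n * |t| ^ k ≤ (1 + r) ^ n := by
    rw [← rpow_div_natCast_pow (abs_nonneg t) k hn, ← mul_pow]
    exact pow_le_pow_left₀ (by positivity) (by linarith) n
  calc y ≤ c / (1 + r) ^ n := hy
    _ ≤ c / (a ^ n * |t| ^ k) := by gcongr
    _ ≤ c * (1 + 1 / T) ^ k / a ^ n / (1 + |t|) ^ k := by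
      rw [div_div, div_le_div_iff₀ (by positivity) (by positivity)]
      have := pow_le_pow_left₀ (by positivity) (one_add_le_one_add_inv_mul hT ht) k
      rw [mul_pow] at this
      calc c * (a ^ n * (1 + |t|) ^ k) ≤ c * (a ^ n * ((1 + 1 / T) ^ k * |t| ^ k)) := by gcongr
        _ = c * (1 + 1 / T) ^ k * (a ^ n * |t| ^ k) := by ring

end DecayBounds

theorem stmt7_general (m : ℕ) (CQ : ℂ → ℂ) (Ω : Set ℂ) (φ : ℝ → ℂ → ℂ)
    (hflowin : ∀ x ∈ Ω, ∀ t : ℝ, φ t x ∈ Ω)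
    (hbound : ∃ c > (0 : ℝ), ∀ x ∈ Ω, ‖CQ x‖ ≤ c / (1 + ‖x‖) ^ (m + 2))
    (hlow : ∀ K : Set ℂ, K ⊆ Ω → IsCompact K →
      ∃ C_K > (0 : ℝ), ∃ T_K > (0 : ℝ), ∀ x ∈ K, ∀ t : ℝ, T_K ≤ |t| →
        C_K * |t| ^ ((2 : ℝ) / (m + 2)) ≤ ‖φ t x‖)
    (K : Set ℂ) (hK : K ⊆ Ω) (hKc : IsCompact K) :
    ∃ M_K > (0 : ℝ), ∀ x ∈ K, ∀ t : ℝ,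
      ‖CQ (φ t x)‖ ≤ M_K / (1 + |t|) ^ 2 := by
  obtain ⟨c, hc, hdecay⟩ := hbound
  obtain ⟨a, ha, T, hT, hgrowth⟩ := hlow K hK hKc
  refine ⟨max (c * (1 + T) ^ 2) (c * (1 + 1 / T) ^ 2 / a ^ (m + 2)),
    lt_max_of_lt_left (by positivity), fun x hx t => ?_⟩
  have hy := hdecay _ (hflowin x (hK hx) t)
  rcases le_or_gt |t| T with hsmall | hlarge
  · refine (le_div_one_add_pow_of_abs_le (k := 2) hc.le (norm_nonneg _) hy hsmall).trans ?_
    gcongr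
    exact le_max_left _ _
  · have hr : a * |t| ^ (((2 : ℕ) : ℝ) / ((m + 2 : ℕ) : ℝ)) ≤ ‖φ t x‖ := by
      exact_mod_cast hgrowth x hx t hlarge.le
    refine (le_div_one_add_pow_of_growth (by omega) hc.le ha hT hlarge.le hr hy).trans ?_
    gcongr
    exact le_max_right _ _

/-- For compact `K` in a Stokes domain `Ω` there is `M_K > 0` with
`|C(φ(t,x))/Q(φ(t,x))| ≤ M_K/(1+|t|)²` for all `x ∈ K`, `t ∈ ℝ`, where `φ` is
the real-time flow of `y' = 1/√Q(y)`, `C/Q = O((1+|x|)^{-(m+2)})` away from the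
turning points, and `|φ(t,x)| ≥ C_K|t|^{2/(m+2)}` for large `|t|`. -/
theorem stmt7 (Q : Polynomial ℂ) (m : ℕ) (hm : Q.natDegree = m) (hm1 : 1 ≤ m)
    (CQ : ℂ → ℂ) (Ω : Set ℂ) (φ : ℝ → ℂ → ℂ)
    (hΩ : IsOpen Ω) (hQ : ∀ x ∈ Ω, Q.eval x ≠ 0)
    (hCQ : ∀ x ∈ Ω, CQ x = (4 * Q.derivative.derivative.eval x * Q.eval x
        - 5 * (Q.derivative.eval x) ^ 2) / (16 * (Q.eval x) ^ 3))
    (hflowin : ∀ x ∈ Ω, ∀ t : ℝ, φ t x ∈ Ω)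
    (hflowcont : ∀ t : ℝ, ContinuousOn (fun x => φ t x) Ω)
    (hcont : ∀ x ∈ Ω, Continuous fun t : ℝ => φ t x)
    (hbound : ∃ c > (0 : ℝ), ∀ x ∈ Ω, ‖CQ x‖ ≤ c / (1 + ‖x‖) ^ (m + 2))
    (hlow : ∀ K : Set ℂ, K ⊆ Ω → IsCompact K →
      ∃ C_K > (0 : ℝ), ∃ T_K > (0 : ℝ), ∀ x ∈ K, ∀ t : ℝ, T_K ≤ |t| →
        C_K * |t| ^ ((2 : ℝ) / (m + 2)) ≤ ‖φ t x‖)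
    (K : Set ℂ) (hK : K ⊆ Ω) (hKc : IsCompact K) :
    ∃ M_K > (0 : ℝ), ∀ x ∈ K, ∀ t : ℝ,
      ‖CQ (φ t x)‖ ≤ M_K / (1 + |t|) ^ 2 :=
  stmt7_general m CQ Ω φ hflowin hbound hlow K hK hKc
end

section
/- Suppose f ∈ 𝒪(Ω) and for every compact L ⊂ Ω, sup_{x∈L, t≤0} |f(φ(t,x))/Q(φ(t,x))| < ∞. Then (K₊f)(x,h) is holomorphic in x on Ω and solves the linear ODE d/dx (K₊f)(x,h) + (2√(Q(x))/h − Q'(x)/(2Q(x)))·(K₊f)(x,h) = f(x). -/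
/-!
Write `K₊f = √Q · I` with `I x = ∫_{t ≤ 0} e^{2t/h} g(φ(t,x)) dt`, `g = f/Q`. Holomorphy of `I`
follows by differentiating under the integral sign, the `x`-derivatives of the integrand being
dominated through Cauchy's estimate by the assumed bound on `g ∘ φ`.

For the equation, move `x` along its own flow: by uniqueness of solutions of `y' = 1/√Q(y)` the
flow is a semigroup, `φ(t, φ(s,x)) = φ(t+s, x)`, so a change of variables gives
`I(φ(s,x)) = e^{-2s/h} ∫_{u ≤ s} e^{2u/h} g(φ(u,x)) du`. Differentiating at `s = 0` from the left
and comparing with the chain rule, `I'(x)/√Q(x) = g(x) - (2/h) I(x)`; together with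
`(√Q)' = Q'/(2√Q)` this is the stated equation for `K₊f`.
-/

open MeasureTheory Set Metric Filter Topology

theorem DifferentiableOn.locallyLipschitzOn_of_isOpen {E : Type*} [NormedAddCommGroup E]
    [NormedSpace ℂ E] [CompleteSpace E] {f : ℂ → E} {s : Set ℂ}
    (hf : DifferentiableOn ℂ f s) (hs : IsOpen s) : LocallyLipschitzOn s f := fun _ hx =>
  let ⟨K, t, ht, hK⟩ :=
    ((hf.contDiffOn hs (n := 1)).contDiffAt (hs.mem_nhds hx)).exists_lipschitzOnWith
  ⟨K, t, mem_nhdsWithin_of_mem_nhds ht, hK⟩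

theorem eqOn_Iic_of_hasDerivAt_of_locallyLipschitzOn {E : Type*} [NormedAddCommGroup E]
    [NormedSpace ℝ E] {v : E → E} {s : Set E} {α β : ℝ → E} {b : ℝ}
    (hv : LocallyLipschitzOn s v)
    (hα : ∀ t ≤ b, HasDerivAt α (v (α t)) t) (hαs : ∀ t ≤ b, α t ∈ s)
    (hβ : ∀ t ≤ b, HasDerivAt β (v (β t)) t) (hβs : ∀ t ≤ b, β t ∈ s)
    (hb : α b = β b) : EqOn α β (Iic b) := by
  intro a ha
  have hαc : ContinuousOn α (Icc a b) := fun t ht =>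
    (hα t ht.2).continuousAt.continuousWithinAt
  have hβc : ContinuousOn β (Icc a b) := fun t ht =>
    (hβ t ht.2).continuousAt.continuousWithinAt
  set K := α '' Icc a b ∪ β '' Icc a b
  have hKs : K ⊆ s := union_subset (image_subset_iff.2 fun t ht => hαs t ht.2)
    (image_subset_iff.2 fun t ht => hβs t ht.2)
  -- on the compact set swept out by both solutions, `v` is globally Lipschitz
  obtain ⟨L, hL⟩ := (hv.mono hKs).exists_lipschitzOnWith_of_compact
    ((isCompact_Icc.image_of_continuousOn hαc).union (isCompact_Icc.image_of_continuousOn hβc))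
  exact ODE_solution_unique_of_mem_Icc_left (v := fun _ => v) (s := fun _ => K)
    (fun _ _ => hL) hαc (fun t ht => (hα t ht.2).hasDerivWithinAt)
    (fun t ht => .inl ⟨t, Ioc_subset_Icc_self ht, rfl⟩) hβc
    (fun t ht => (hβ t ht.2).hasDerivWithinAt)
    (fun t ht => .inr ⟨t, Ioc_subset_Icc_self ht, rfl⟩) hb ⟨le_rfl, ha⟩

theorem aestronglyMeasurable_deriv_of_eventually {α : Type*} [MeasurableSpace α]
    {μ : Measure α} {𝕜 : Type*} [NontriviallyNormedField 𝕜] {E : Type*} [NormedAddCommGroup E]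
    [NormedSpace 𝕜 E] {F : α → 𝕜 → E} {x₀ : 𝕜}
    (hF_meas : ∀ᶠ z in 𝓝 x₀, AEStronglyMeasurable (F · z) μ)
    (hF_diff : ∀ᵐ t ∂μ, DifferentiableAt 𝕜 (F t) x₀) :
    AEStronglyMeasurable (fun t => deriv (F t) x₀) μ := by
  obtain ⟨u, hu⟩ := exists_seq_tendsto (𝓝[≠] x₀)
  obtain ⟨N, hN⟩ := eventually_atTop.1 (hu.eventually (mem_nhdsWithin_of_mem_nhds hF_meas))
  refine aestronglyMeasurable_of_tendsto_ae atTop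
    (f := fun n t => slope (F t) x₀ (u (n + N))) (fun n => ?_) ?_
  · simp only [slope_def_module]
    exact ((hN (n + N) le_add_self).sub hF_meas.self_of_nhds).const_smul _
  · filter_upwards [hF_diff] with t ht
    exact ht.hasDerivAt.tendsto_slope.comp ((tendsto_add_atTop_iff_nat N).2 hu)

theorem differentiableAt_integral_of_forall_norm_le {α : Type*} [MeasurableSpace α]
    {μ : Measure α} {E : Type*} [NormedAddCommGroup E] [NormedSpace ℂ E] [CompleteSpace E]
    {F : α → ℂ → E} {x₀ : ℂ} {R : ℝ} (hR : 0 < R) {bound : α → ℝ}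
    (hF_meas : ∀ z ∈ ball x₀ R, AEStronglyMeasurable (F · z) μ)
    (hF_diff : ∀ᵐ t ∂μ, DifferentiableOn ℂ (F t) (closedBall x₀ R))
    (h_bound : ∀ᵐ t ∂μ, ∀ z ∈ closedBall x₀ R, ‖F t z‖ ≤ bound t)
    (bound_integrable : Integrable bound μ) :
    DifferentiableAt ℂ (fun z => ∫ t, F t z ∂μ) x₀ := by
  have hr : 0 < R / 2 := half_pos hR
  have hball : ball x₀ R ∈ 𝓝 x₀ := ball_mem_nhds x₀ hR
  have hderiv : ∀ᵐ t ∂μ, ∀ z ∈ ball x₀ R, HasDerivAt (F t) (deriv (F t) z) z := by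
    filter_upwards [hF_diff] with t ht z hz
    exact (ht.differentiableAt (mem_of_superset (isOpen_ball.mem_nhds hz)
      ball_subset_closedBall)).hasDerivAt
  -- Cauchy's estimate on circles of radius `R / 2` centred in `ball x₀ (R / 2)`
  have hderiv_le : ∀ᵐ t ∂μ, ∀ z ∈ ball x₀ (R / 2), ‖deriv (F t) z‖ ≤ bound t / (R / 2) := by
    filter_upwards [hF_diff, h_bound] with t hdiff hbound z hz
    have hsub : closedBall z (R / 2) ⊆ closedBall x₀ R := closedBall_subset_closedBall' (by
      linarith [mem_ball.1 hz])
    refine Complex.norm_deriv_le_of_forall_mem_sphere_norm_le hr ?_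
      fun w hw => hbound w (hsub (sphere_subset_closedBall hw))
    exact (hdiff.mono ((closure_ball z hr.ne').symm ▸ hsub)).diffContOnCl
  have hF_int : Integrable (F · x₀) μ := bound_integrable.mono' (hF_meas x₀ (mem_ball_self hR))
    (h_bound.mono fun t ht => ht x₀ (mem_closedBall_self hR.le))
  refine (hasDerivAt_integral_of_dominated_loc_of_deriv_le (F := fun z t => F t z)
    (ball_mem_nhds x₀ hr) (eventually_of_mem hball hF_meas) hF_int
    (aestronglyMeasurable_deriv_of_eventually (eventually_of_mem hball hF_meas)
      (hderiv.mono fun t ht => (ht x₀ (mem_ball_self hR)).differentiableAt))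
    hderiv_le (bound_integrable.div_const _)
    (hderiv.mono fun t ht z hz => ht z (ball_subset_ball (by linarith) hz))).2.differentiableAt

section IntegralIic

variable {E : Type*} [NormedAddCommGroup E] [NormedSpace ℝ E]

theorem setIntegral_Iic_comp_add_right (f : ℝ → E) (a s : ℝ) :
    ∫ t in Iic a, f (t + s) = ∫ u in Iic (a + s), f u := by
  have hpre : (· + s) ⁻¹' Iic (a + s) = Iic a := by ext; simp
  rw [← hpre, (measurePreserving_add_right volume s).setIntegral_preimage_emb
    (measurableEmbedding_addRight s)]

theorem hasDerivWithinAt_setIntegral_Iic [CompleteSpace E] {f : ℝ → E} {b : ℝ}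
    (hf : IntegrableOn f (Iic b)) (hfb : ContinuousWithinAt f (Iic b) b) :
    HasDerivWithinAt (fun s => ∫ t in Iic s, f t) (f b) (Iic b) b := by
  have hFTC : HasDerivWithinAt (fun s => ∫ t in b..s, f t) (f b) (Iic b) b :=
    intervalIntegral.integral_hasDerivWithinAt_right IntervalIntegrable.refl
      ⟨Iic b, self_mem_nhdsWithin, hf.aestronglyMeasurable⟩ hfb
  refine (hFTC.const_add (∫ t in Iic b, f t)).congr (fun s hs => ?_) (by simp)
  rw [← intervalIntegral.integral_Iic_sub_Iic hf (hf.mono_set (Iic_subset_Iic.2 hs))]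
  abel

end IntegralIic

theorem mul_deriv_eq_of_hasDerivWithinAt_comp {f : ℂ → ℂ} {γ : ℝ → ℂ} {c D x : ℂ} {b : ℝ}
    (hγb : γ b = x) (hf : DifferentiableAt ℂ f x) (hγ : HasDerivAt γ c b)
    (hD : HasDerivWithinAt (fun s => f (γ s)) D (Iic b) b) : c * deriv f x = D := by
  subst hγb
  rw [mul_comm]
  exact (uniqueDiffOn_Iic b b self_mem_Iic).eq_deriv _
    (hf.hasDerivAt.comp b hγ).hasDerivWithinAt hD

theorem two_mul_mul_deriv_eq_of_sq_eq {s P : ℂ → ℂ} {P' x : ℂ}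
    (hs : DifferentiableAt ℂ s x) (hP : HasDerivAt P P' x) (hsP : (s · ^ 2) =ᶠ[𝓝 x] P) :
    2 * s x * deriv s x = P' := by
  have := (hs.hasDerivAt.pow 2).congr_of_eventuallyEq hsP.symm
  exact hP.unique (by simpa [mul_comm, mul_assoc, mul_left_comm] using this) |>.symm

/-- With `g = f / Q` this is `(K₊f)(x, h) / √Q(x)`. -/
noncomputable def flowTransform (h : ℝ) (φ : ℝ → ℂ → ℂ) (g : ℂ → ℂ) (x : ℂ) : ℂ :=
  ∫ t in Iic (0 : ℝ), Complex.exp (2 * (t : ℂ) / (h : ℂ)) * g (φ t x)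

section Flow

variable {Ω : Set ℂ} {φ : ℝ → ℂ → ℂ} {g v : ℂ → ℂ} {h : ℝ}

theorem norm_cexp_two_mul_div (t h : ℝ) :
    ‖Complex.exp (2 * (t : ℂ) / (h : ℂ))‖ = Real.exp (2 / h * t) := by
  rw [Complex.norm_exp]
  congr 1
  norm_cast
  ring

theorem continuousOn_flowIntegrand {x : ℂ} (hg : ContinuousOn g Ω)
    (hφ : ContinuousOn (φ · x) (Iic 0)) (hφΩ : ∀ t ≤ 0, φ t x ∈ Ω) :
    ContinuousOn (fun t : ℝ => Complex.exp (2 * (t : ℂ) / (h : ℂ)) * g (φ t x)) (Iic 0) :=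
  (Continuous.continuousOn (by fun_prop)).mul (hg.comp hφ hφΩ)

theorem norm_flowIntegrand_le {x : ℂ} {t M : ℝ} (hM : ‖g (φ t x)‖ ≤ M) :
    ‖Complex.exp (2 * (t : ℂ) / (h : ℂ)) * g (φ t x)‖ ≤ Real.exp (2 / h * t) * M := by
  rw [norm_mul, norm_cexp_two_mul_div]
  exact mul_le_mul_of_nonneg_left hM (Real.exp_nonneg _)

theorem integrableOn_flowIntegrand (hh : 0 < h) {x : ℂ} {M : ℝ} (hg : ContinuousOn g Ω)
    (hφ : ContinuousOn (φ · x) (Iic 0)) (hφΩ : ∀ t ≤ 0, φ t x ∈ Ω)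
    (hM : ∀ t ≤ 0, ‖g (φ t x)‖ ≤ M) :
    IntegrableOn (fun t : ℝ => Complex.exp (2 * (t : ℂ) / (h : ℂ)) * g (φ t x)) (Iic 0) :=
  ((integrableOn_exp_mul_Iic (div_pos two_pos hh) 0).mul_const M).mono'
    ((continuousOn_flowIntegrand hg hφ hφΩ).aestronglyMeasurable measurableSet_Iic)
    ((ae_restrict_iff' measurableSet_Iic).2
      (.of_forall fun t ht => norm_flowIntegrand_le (hM t ht)))

theorem differentiableOn_flowTransform (hh : 0 < h) (hΩ : IsOpen Ω)
    (hg : DifferentiableOn ℂ g Ω) (hφΩ : ∀ x ∈ Ω, ∀ t ≤ 0, φ t x ∈ Ω)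
    (hφ : ∀ x ∈ Ω, ContinuousOn (φ · x) (Iic 0))
    (hφ_hol : ∀ t ≤ 0, DifferentiableOn ℂ (φ t) Ω)
    (hbdd : ∀ L ⊆ Ω, IsCompact L → ∃ M, ∀ x ∈ L, ∀ t ≤ 0, ‖g (φ t x)‖ ≤ M) :
    DifferentiableOn ℂ (flowTransform h φ g) Ω := by
  intro x₀ hx₀
  obtain ⟨R, hR, hRΩ⟩ := nhds_basis_closedBall.mem_iff.1 (hΩ.mem_nhds hx₀)
  obtain ⟨M, hM⟩ := hbdd _ hRΩ (isCompact_closedBall x₀ R)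
  have hzΩ : ∀ z ∈ ball x₀ R, z ∈ Ω := fun z hz => hRΩ (ball_subset_closedBall hz)
  refine (differentiableAt_integral_of_forall_norm_le hR (fun z hz =>
    (continuousOn_flowIntegrand hg.continuousOn (hφ z (hzΩ z hz)) (hφΩ z (hzΩ z hz))
      ).aestronglyMeasurable measurableSet_Iic) ?_ ?_
    ((integrableOn_exp_mul_Iic (div_pos two_pos hh) 0).mul_const M)).differentiableWithinAt
  · filter_upwards [ae_restrict_mem measurableSet_Iic] with t ht
    exact ((hg.comp (hφ_hol t ht) fun z hz => hφΩ z hz t ht).const_mul _).mono hRΩ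
  · filter_upwards [ae_restrict_mem measurableSet_Iic] with t ht z hz
    exact norm_flowIntegrand_le (hM z hz t ht)

theorem flow_add (hΩ : IsOpen Ω) (hv : DifferentiableOn ℂ v Ω)
    (hφ0 : ∀ x ∈ Ω, φ 0 x = x) (hφΩ : ∀ x ∈ Ω, ∀ t ≤ 0, φ t x ∈ Ω)
    (hφ' : ∀ x ∈ Ω, ∀ t ≤ 0, HasDerivAt (φ · x) (v (φ t x)) t)
    {x : ℂ} (hx : x ∈ Ω) {s : ℝ} (hs : s ≤ 0) {t : ℝ} (ht : t ≤ 0) :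
    φ t (φ s x) = φ (t + s) x := by
  have hsx : φ s x ∈ Ω := hφΩ x hx s hs
  refine eqOn_Iic_of_hasDerivAt_of_locallyLipschitzOn (hv.locallyLipschitzOn_of_isOpen hΩ)
    (α := (φ · (φ s x))) (β := fun u => φ (u + s) x) (hφ' _ hsx) (hφΩ _ hsx)
    (fun u hu => (hφ' x hx (u + s) (add_nonpos hu hs)).comp_add_const u s)
    (fun u hu => hφΩ x hx (u + s) (add_nonpos hu hs)) ?_ ht
  simp only [hφ0 _ hsx, zero_add]

theorem flowTransform_flow {x : ℂ} {s : ℝ} (hφ_add : ∀ t ≤ 0, φ t (φ s x) = φ (t + s) x) :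
    flowTransform h φ g (φ s x) = Complex.exp (-(2 / h) * s) *
      ∫ u in Iic s, Complex.exp (2 * (u : ℂ) / (h : ℂ)) * g (φ u x) := by
  have hshift : ∀ t ∈ Iic (0 : ℝ), Complex.exp (2 * (t : ℂ) / h) * g (φ t (φ s x)) =
      Complex.exp (-(2 / h) * s) *
        (Complex.exp (2 * ((t + s : ℝ) : ℂ) / h) * g (φ (t + s) x)) := by
    intro t ht
    rw [hφ_add t ht, ← mul_assoc, ← Complex.exp_add]
    push_cast
    ring_nf
  rw [flowTransform, setIntegral_congr_fun measurableSet_Iic hshift, integral_const_mul,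
    setIntegral_Iic_comp_add_right
      (fun u => Complex.exp (2 * (u : ℂ) / h) * g (φ u x)) 0 s, zero_add]

theorem hasDerivWithinAt_flowTransform_flow {x : ℂ} (hφ0 : φ 0 x = x)
    (hφ_add : ∀ s ≤ 0, ∀ t ≤ 0, φ t (φ s x) = φ (t + s) x)
    (hint : IntegrableOn (fun t : ℝ => Complex.exp (2 * (t : ℂ) / (h : ℂ)) * g (φ t x)) (Iic 0))
    (hcont : ContinuousWithinAt (fun t : ℝ => Complex.exp (2 * (t : ℂ) / (h : ℂ)) * g (φ t x))
      (Iic 0) 0) :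
    HasDerivWithinAt (fun s : ℝ => flowTransform h φ g (φ s x))
      (g x - 2 / h * flowTransform h φ g x) (Iic 0) 0 := by
  have hexp : HasDerivAt (fun s : ℝ => Complex.exp (-(2 / h) * s)) (-(2 / h)) 0 := by
    simpa using (((hasDerivAt_id (0 : ℂ)).const_mul (-(2 / (h : ℂ)))).cexp).comp_ofReal
  have := hexp.hasDerivWithinAt.fun_mul (hasDerivWithinAt_setIntegral_Iic hint hcont)
  refine (this.congr (fun s hs => flowTransform_flow (hφ_add s hs)) ?_).congr_deriv ?_
  · simp [flowTransform, hφ0]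
  · simp only [flowTransform, hφ0, Complex.ofReal_zero, mul_zero, zero_div, Complex.exp_zero]
    ring

theorem mul_deriv_flowTransform (hh : 0 < h) (hΩ : IsOpen Ω) (hv : DifferentiableOn ℂ v Ω)
    (hg : ContinuousOn g Ω) (hφ0 : ∀ x ∈ Ω, φ 0 x = x) (hφΩ : ∀ x ∈ Ω, ∀ t ≤ 0, φ t x ∈ Ω)
    (hφ' : ∀ x ∈ Ω, ∀ t ≤ 0, HasDerivAt (φ · x) (v (φ t x)) t) {x : ℂ} (hx : x ∈ Ω) {M : ℝ}
    (hM : ∀ t ≤ 0, ‖g (φ t x)‖ ≤ M) (hI : DifferentiableAt ℂ (flowTransform h φ g) x) :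
    v x * deriv (flowTransform h φ g) x = g x - 2 / h * flowTransform h φ g x := by
  have hφ : ContinuousOn (φ · x) (Iic 0) := fun t ht =>
    (hφ' x hx t ht).continuousAt.continuousWithinAt
  refine mul_deriv_eq_of_hasDerivWithinAt_comp (hφ0 x hx) hI
    (by simpa only [hφ0 x hx] using hφ' x hx 0 le_rfl)
    (hasDerivWithinAt_flowTransform_flow (hφ0 x hx)
      (fun s hs t ht => flow_add hΩ hv hφ0 hφΩ hφ' hx hs ht)
      (integrableOn_flowIntegrand hh hg hφ (hφΩ x hx) hM)
      (continuousOn_flowIntegrand hg hφ (hφΩ x hx) 0 self_mem_Iic))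

end Flow

theorem stmt9_general (Q : Polynomial ℂ) (sq : ℂ → ℂ) (Ω : Set ℂ) (φ : ℝ → ℂ → ℂ)
    (f : ℂ → ℂ) (h : ℝ) (hh : 0 < h)
    (hΩ : IsOpen Ω) (hQ : ∀ x ∈ Ω, Q.eval x ≠ 0)
    (hsq : ∀ x ∈ Ω, sq x ^ 2 = Q.eval x)
    (hsqd : DifferentiableOn ℂ sq Ω)
    (hf : DifferentiableOn ℂ f Ω)
    (hflow0 : ∀ x ∈ Ω, φ 0 x = x)
    (hflowin : ∀ x ∈ Ω, ∀ t : ℝ, t ≤ 0 → φ t x ∈ Ω)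
    (hflowode : ∀ x ∈ Ω, ∀ t : ℝ, t ≤ 0 →
      HasDerivAt (fun s => φ s x) (1 / sq (φ t x)) t)
    (hflowhol : ∀ t : ℝ, t ≤ 0 → DifferentiableOn ℂ (fun x => φ t x) Ω)
    (hbdd : ∀ L : Set ℂ, L ⊆ Ω → IsCompact L → ∃ M_L : ℝ, ∀ x ∈ L, ∀ t : ℝ,
      t ≤ 0 → ‖f (φ t x) / Q.eval (φ t x)‖ ≤ M_L)
    (Kf : ℂ → ℂ)
    (hKf : ∀ x ∈ Ω, Kf x = sq x * ∫ t in Set.Iic (0 : ℝ),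
      Complex.exp (2 * (t : ℂ) / (h : ℂ)) * (f (φ t x) / Q.eval (φ t x))) :
    DifferentiableOn ℂ Kf Ω ∧ ∀ x ∈ Ω,
      HasDerivAt Kf
        (f x - (2 * sq x / (h : ℂ) - Q.derivative.eval x / (2 * Q.eval x)) * Kf x)
        x := by
  set I := flowTransform h φ fun y => f y / Q.eval y
  have hKfI : ∀ x ∈ Ω, Kf x = sq x * I x := hKf
  have hsq0 : ∀ x ∈ Ω, sq x ≠ 0 := fun x hx h0 => hQ x hx (by rw [← hsq x hx, h0]; ring)
  have hg : DifferentiableOn ℂ (fun y => f y / Q.eval y) Ω :=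
    hf.div Q.differentiable.differentiableOn hQ
  have hI : DifferentiableOn ℂ I Ω := differentiableOn_flowTransform hh hΩ hg hflowin
    (fun x hx t ht => (hflowode x hx t ht).continuousAt.continuousWithinAt) hflowhol hbdd
  refine ⟨(hsqd.mul hI).congr hKfI, fun x hx => ?_⟩
  have hnhds : Ω ∈ 𝓝 x := hΩ.mem_nhds hx
  obtain ⟨M, hM⟩ := hbdd {x} (singleton_subset_iff.2 hx) isCompact_singleton
  have hI' : 1 / sq x * deriv I x = f x / Q.eval x - 2 / h * I x :=
    mul_deriv_flowTransform (v := fun y => 1 / sq y) hh hΩ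
      ((differentiableOn_const 1).div hsqd hsq0) hg.continuousOn hflow0 hflowin hflowode hx
      (hM x rfl) (hI.differentiableAt hnhds)
  have hsq' : 2 * sq x * deriv sq x = Q.derivative.eval x :=
    two_mul_mul_deriv_eq_of_sq_eq (hsqd.differentiableAt hnhds) (Q.hasDerivAt x)
      (eventually_of_mem hnhds hsq)
  have hK : HasDerivAt Kf (deriv sq x * I x + sq x * deriv I x) x :=
    ((hsqd.differentiableAt hnhds).hasDerivAt.mul (hI.differentiableAt hnhds).hasDerivAt
      ).congr_of_eventuallyEq (eventually_of_mem hnhds hKfI)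
  have hI'' : deriv I x = sq x * (f x / Q.eval x - 2 / h * I x) := by
    rw [← hI']
    field_simp [hsq0 x hx]
  convert hK using 1
  rw [hKfI x hx, hI'', ← hsq x hx, ← hsq']
  field_simp [hsq0 x hx]
  ring

/-- If `f ∈ 𝒪(Ω)` and `f(φ(t,x))/Q(φ(t,x))` is bounded on
`L × (−∞,0]` for each compact `L ⊆ Ω`, then
`(K₊f)(x,h) = √Q(x) ∫_{−∞}^0 e^{2t/h} f(φ(t,x))/Q(φ(t,x)) dt` is holomorphic
on `Ω` and solves `(K₊f)' + (2√Q/h − Q'/(2Q))·(K₊f) = f`. -/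
theorem stmt9 (Q : Polynomial ℂ) (sq S : ℂ → ℂ) (Ω : Set ℂ) (φ : ℝ → ℂ → ℂ)
    (f : ℂ → ℂ) (h : ℝ) (hh : 0 < h)
    (hΩ : IsOpen Ω) (hQ : ∀ x ∈ Ω, Q.eval x ≠ 0)
    (hsq : ∀ x ∈ Ω, sq x ^ 2 = Q.eval x)
    (hsqd : DifferentiableOn ℂ sq Ω)
    (hf : DifferentiableOn ℂ f Ω)
    (hflow0 : ∀ x ∈ Ω, φ 0 x = x)
    (hflowin : ∀ x ∈ Ω, ∀ t : ℝ, t ≤ 0 → φ t x ∈ Ω)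
    (hflowode : ∀ x ∈ Ω, ∀ t : ℝ, t ≤ 0 →
      HasDerivAt (fun s => φ s x) (1 / sq (φ t x)) t)
    (hflowhol : ∀ t : ℝ, t ≤ 0 → DifferentiableOn ℂ (fun x => φ t x) Ω)
    (hflowcont : ∀ x ∈ Ω, Continuous fun t : ℝ => φ t x)
    (hbdd : ∀ L : Set ℂ, L ⊆ Ω → IsCompact L → ∃ M_L : ℝ, ∀ x ∈ L, ∀ t : ℝ,
      t ≤ 0 → ‖f (φ t x) / Q.eval (φ t x)‖ ≤ M_L)
    (Kf : ℂ → ℂ)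
    (hKf : ∀ x ∈ Ω, Kf x = sq x * ∫ t in Set.Iic (0 : ℝ),
      Complex.exp (2 * (t : ℂ) / (h : ℂ)) * (f (φ t x) / Q.eval (φ t x))) :
    DifferentiableOn ℂ Kf Ω ∧ ∀ x ∈ Ω,
      HasDerivAt Kf
        (f x - (2 * sq x / (h : ℂ) - Q.derivative.eval x / (2 * Q.eval x)) * Kf x)
        x :=
  stmt9_general Q sq Ω φ f h hh hΩ hQ hsq hsqd hf hflow0 hflowin hflowode hflowhol hbdd Kf hKf
end

section
/- Let Ω be a Stokes domain of type (1) (∂Ω is a single connected Stokes curve 𝒞 through the turning point a, with Im 𝔖_a = 0 on ∂Ω and Im 𝔖_a > 0 on Ω). Then {Im 𝔖_a(x) : x ∈ Ω} = (0, +∞), i.e. μ = sup_{x∈Ω} Im 𝔖_a(x) = +∞. -/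
/-!
Pick `x₀ ∈ Ω` near `a` with `Im S x₀` below the target value and follow the vertical flow of `S`:
invert `S` locally and push `S x` straight up. The flow stays in `{x ∈ Ω | Im S x₀ ≤ Im S x}`, which
is closed because `Im S` vanishes on `∂Ω`; there the polynomial `Q = sq ^ 2` is bounded away from
`0` since it tends to infinity, so the flow has speed at most some `C`. The points reached at time
`t` thus stay within `C * t` of `x₀`, which makes the set of reachable times closed by compactness,
and local invertibility makes it open to the right; hence every time `T ≥ 0` is reached.
-/

open Set Filter Complex Topology Polynomial

theorem IsClosed.exists_pos_le_of_tendsto_cocompact {X : Type*} [TopologicalSpace X]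
    {φ : X → ℝ} (hφ : Continuous φ) (hφ_top : Tendsto φ (cocompact X) atTop) {G : Set X}
    (hG : IsClosed G) (hpos : ∀ x ∈ G, 0 < φ x) : ∃ m > 0, ∀ x ∈ G, m ≤ φ x := by
  rcases G.eq_empty_or_nonempty with rfl | ⟨x, hx⟩
  · exact ⟨1, one_pos, by simp⟩
  have : Nonempty G := ⟨⟨x, hx⟩⟩
  obtain ⟨⟨x₀, hx₀⟩, hmin⟩ := (hφ.comp continuous_subtype_val).exists_forall_le
    (hφ_top.comp hG.isClosedEmbedding_subtypeVal.tendsto_cocompact)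
  exact ⟨φ x₀, hpos x₀ hx₀, fun y hy => hmin ⟨y, hy⟩⟩

theorem Polynomial.exists_pos_le_norm_eval {R : Type*} [NormedField R] [ProperSpace R]
    {Q : R[X]} (hQ : 0 < Q.degree) {G : Set R} (hG : IsClosed G)
    (hQG : ∀ x ∈ G, Q.eval x ≠ 0) : ∃ m > 0, ∀ x ∈ G, m ≤ ‖Q.eval x‖ :=
  hG.exists_pos_le_of_tendsto_cocompact Q.continuous.norm
    (Q.tendsto_norm_atTop hQ tendsto_norm_cocompact_atTop) fun x hx => norm_pos_iff.2 (hQG x hx)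

theorem isClosed_sep_le_of_eq_zero_on_frontier {X : Type*} [TopologicalSpace X] {φ : X → ℝ}
    {Ω : Set X} (hφ : ContinuousOn φ (closure Ω)) (hφ0 : ∀ x ∈ frontier Ω, φ x = 0) {c : ℝ}
    (hc : 0 < c) : IsClosed {x ∈ Ω | c ≤ φ x} := by
  have : {x ∈ Ω | c ≤ φ x} = closure Ω ∩ φ ⁻¹' Ici c := by
    ext x
    refine ⟨fun hx => ⟨subset_closure hx.1, hx.2⟩, fun ⟨hxcl, hcx⟩ => ⟨?_, hcx⟩⟩
    rcases closure_eq_self_union_frontier Ω ▸ hxcl with hxΩ | hxfr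
    · exact hxΩ
    · exact absurd (hφ0 x hxfr) (by simp only [mem_preimage, mem_Ici] at hcx; linarith)
  rw [this]
  exact hφ.preimage_isClosed_of_isClosed isClosed_closure isClosed_Ici

section VerticalFlow

variable {S f : ℂ → ℂ} {U : Set ℂ}

theorem hasStrictDerivAt_of_forall_hasDerivAt (hU : IsOpen U)
    (hS : ∀ x ∈ U, HasDerivAt S (f x) x) {x : ℂ} (hx : x ∈ U) : HasStrictDerivAt S (f x) x := by
  have hSU : DifferentiableOn ℂ S U := fun y hy => (hS y hy).differentiableAt.differentiableWithinAt
  simpa only [(hS x hx).deriv] using (hSU.analyticAt (hU.mem_nhds hx)).hasStrictDerivAt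

theorem exists_localInverse (hU : IsOpen U) (hS : ∀ x ∈ U, HasDerivAt S (f x) x)
    (hf : ∀ x ∈ U, f x ≠ 0) {x : ℂ} (hx : x ∈ U) :
    ∃ g : ℂ → ℂ, g (S x) = x ∧
      ∀ᶠ w in 𝓝 (S x), g w ∈ U ∧ S (g w) = w ∧ HasDerivAt g (f (g w))⁻¹ w := by
  have hst := (hasStrictDerivAt_of_forall_hasDerivAt hU hS hx).hasStrictFDerivAt_equiv (hf x hx)
  set e := hst.toOpenPartialHomeomorph S
  have he : (e : ℂ → ℂ) = S := hst.toOpenPartialHomeomorph_coe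
  have hxe : x ∈ e.source := hst.mem_toOpenPartialHomeomorph_source
  have hSx : S x ∈ e.target := he ▸ e.map_source hxe
  have hgx : e.symm (S x) = x := he ▸ e.left_inv hxe
  refine ⟨e.symm, hgx, ?_⟩
  filter_upwards [e.open_target.mem_nhds hSx,
    e.continuousAt_symm hSx (hU.mem_nhds (hgx.symm ▸ hx))] with w hw hwU
  refine ⟨hwU, he ▸ e.right_inv hw, (e.hasStrictDerivAt_symm hw (hf _ hwU) ?_).hasDerivAt⟩
  rw [he]
  exact hasStrictDerivAt_of_forall_hasDerivAt hU hS hwU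

theorem exists_pos_forall_vertical_step (hU : IsOpen U) (hS : ∀ x ∈ U, HasDerivAt S (f x) x)
    (hf : ∀ x ∈ U, f x ≠ 0) {C : ℝ} {x : ℂ} (hx : x ∈ U)
    (hC : ∀ y ∈ U, (S x).im ≤ (S y).im → ‖f y‖⁻¹ ≤ C) :
    ∃ δ > (0 : ℝ), ∀ s ∈ Ico 0 δ, ∃ y ∈ U, S y = S x + s * I ∧ ‖y - x‖ ≤ C * s := by
  obtain ⟨g, hgx, hg⟩ := exists_localInverse hU hS hf hx
  set w : ℝ → ℂ := fun s => S x + s * I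
  have hw : Tendsto w (𝓝 0) (𝓝 (S x)) :=
    (by fun_prop : Continuous w).tendsto' 0 (S x) (by simp [w])
  obtain ⟨δ, hδ, hball⟩ := Metric.eventually_nhds_iff.1 (hw.eventually hg)
  refine ⟨δ, hδ, fun s hs => ?_⟩
  have hgw : ∀ r ∈ Icc 0 s,
      g (w r) ∈ U ∧ S (g (w r)) = w r ∧ HasDerivAt g (f (g (w r)))⁻¹ (w r) := fun r hr =>
    hball (by rw [Real.dist_eq, sub_zero, abs_of_nonneg hr.1]; exact hr.2.trans_lt hs.2)
  have hderiv : ∀ r ∈ Icc 0 s,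
      HasDerivWithinAt (fun r => g (w r)) ((f (g (w r)))⁻¹ * I) (Icc 0 s) r := by
    intro r hr
    have hline : HasDerivAt (fun z : ℂ => S x + z * I) I r := by
      simpa using ((hasDerivAt_id (r : ℂ)).mul_const I).const_add (S x)
    exact ((hgw r hr).2.2.comp (r : ℂ) hline).comp_ofReal.hasDerivWithinAt
  have hbound : ∀ r ∈ Icc 0 s, ‖(f (g (w r)))⁻¹ * I‖ ≤ C := by
    intro r hr
    obtain ⟨hgU, hSg, -⟩ := hgw r hr
    rw [norm_mul, norm_I, mul_one, norm_inv]
    exact hC _ hgU (by simp [hSg, w, hr.1])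
  have hs0 : s ∈ Icc 0 s := ⟨hs.1, le_rfl⟩
  refine ⟨g (w s), (hgw s hs0).1, (hgw s hs0).2.1, ?_⟩
  have := (convex_Icc 0 s).norm_image_sub_le_of_norm_hasDerivWithin_le hderiv hbound
    (left_mem_Icc.2 hs.1) hs0
  simpa [w, hgx, abs_of_nonneg hs.1] using this

/-- The bound `‖y - x₀‖ ≤ C * t` confines the witnesses for `t ≤ T` to a compact set. -/
def verticalReach (S : ℂ → ℂ) (U : Set ℂ) (x₀ : ℂ) (C : ℝ) : Set ℝ :=
  {t | ∃ y ∈ U, S y = S x₀ + t * I ∧ ‖y - x₀‖ ≤ C * t}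

theorem isClosed_verticalReach_inter_Icc (hS : ContinuousOn S U) {x₀ : ℂ}
    (hF : IsClosed {y ∈ U | (S x₀).im ≤ (S y).im}) {C : ℝ} (hC : 0 ≤ C) (T : ℝ) :
    IsClosed (verticalReach S U x₀ C ∩ Icc 0 T) := by
  set F := {y ∈ U | (S x₀).im ≤ (S y).im}
  set G : Set (ℝ × ℂ) := ((Icc 0 T ×ˢ F) ∩ (fun p => S p.2 - p.1 * I) ⁻¹' {S x₀}) ∩
    {p | ‖p.2 - x₀‖ ≤ C * p.1}
  have hG : IsCompact G := by
    refine ((isCompact_Icc (a := 0) (b := T)).prod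
      (isCompact_closedBall x₀ (C * T))).of_isClosed_subset ?_ ?_
    · refine IsClosed.inter ?_ (isClosed_le (by fun_prop) (by fun_prop))
      refine ContinuousOn.preimage_isClosed_of_isClosed ?_ (isClosed_Icc.prod hF)
        isClosed_singleton
      exact ((hS.mono fun y hy => hy.1).comp continuousOn_snd fun p hp => hp.2).sub (by fun_prop)
    · rintro ⟨t, y⟩ ⟨⟨⟨ht, -⟩, -⟩, hyx₀⟩
      exact ⟨ht, mem_closedBall_iff_norm.2 (hyx₀.trans (mul_le_mul_of_nonneg_left ht.2 hC))⟩
  suffices verticalReach S U x₀ C ∩ Icc 0 T = Prod.fst '' G from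
    this ▸ (hG.image continuous_fst).isClosed
  ext t
  constructor
  · rintro ⟨⟨y, hy, hSy, hyx₀⟩, ht⟩
    exact ⟨(t, y), ⟨⟨⟨ht, hy, by simp [hSy, ht.1]⟩, by simp [hSy]⟩, hyx₀⟩, rfl⟩
  · rintro ⟨⟨t, y⟩, ⟨⟨⟨ht, hy, -⟩, hSy⟩, hyx₀⟩, rfl⟩
    exact ⟨⟨y, hy, sub_eq_iff_eq_add.1 hSy, hyx₀⟩, ht⟩

theorem exists_eq_add_mul_I (hU : IsOpen U) (hS : ∀ x ∈ U, HasDerivAt S (f x) x)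
    (hf : ∀ x ∈ U, f x ≠ 0) {x₀ : ℂ} (hx₀ : x₀ ∈ U)
    (hF : IsClosed {y ∈ U | (S x₀).im ≤ (S y).im}) {C : ℝ}
    (hC : ∀ y ∈ U, (S x₀).im ≤ (S y).im → ‖f y‖⁻¹ ≤ C) {T : ℝ} (hT : 0 ≤ T) :
    ∃ y ∈ U, S y = S x₀ + T * I := by
  suffices Icc 0 T ⊆ verticalReach S U x₀ C by
    obtain ⟨y, hy, hSy, -⟩ := this ⟨hT, le_rfl⟩
    exact ⟨y, hy, hSy⟩
  have hC0 : 0 ≤ C := (inv_nonneg.2 (norm_nonneg _)).trans (hC x₀ hx₀ le_rfl)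
  have hScont : ContinuousOn S U := fun y hy => (hS y hy).continuousAt.continuousWithinAt
  refine (isClosed_verticalReach_inter_Icc hScont hF hC0 T).Icc_subset_of_forall_mem_nhdsWithin
    ⟨x₀, hx₀, by simp, by simp⟩ ?_
  rintro t ⟨⟨y, hy, hSy, hyx₀⟩, ht, -⟩
  have hSy_im : (S y).im = (S x₀).im + t := by simp [hSy]
  obtain ⟨δ, hδ, hstep⟩ := exists_pos_forall_vertical_step hU hS hf hy
    fun z hz hyz => hC z hz (by linarith)
  refine mem_nhdsGT_iff_exists_Ioo_subset.2 ⟨t + δ, by simpa using hδ, fun s hs => ?_⟩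
  obtain ⟨z, hz, hSz, hzy⟩ := hstep (s - t) ⟨by linarith [hs.1], by linarith [hs.2]⟩
  refine ⟨z, hz, by rw [hSz, hSy]; push_cast; ring, ?_⟩
  calc ‖z - x₀‖ ≤ ‖z - y‖ + ‖y - x₀‖ := norm_sub_le_norm_sub_add_norm_sub _ _ _
    _ ≤ C * (s - t) + C * t := add_le_add hzy hyx₀
    _ = C * s := by ring

end VerticalFlow

theorem stmt16_general (Q : Polynomial ℂ) (a : ℂ) (ha : Q.eval a = 0)
    (sq S : ℂ → ℂ) (Ω : Set ℂ)
    (hΩ : IsOpen Ω) (haΩ : a ∈ frontier Ω)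
    (hQ : ∀ x ∈ Ω, Q.eval x ≠ 0)
    (hsq : ∀ x ∈ Ω, sq x ^ 2 = Q.eval x)
    (hScont : ContinuousOn S (closure Ω))
    (hSd : ∀ x ∈ Ω, HasDerivAt S (sq x) x)
    (hSa : S a = 0)
    (hpos : ∀ x ∈ Ω, 0 < (S x).im)
    (hbd : ∀ x ∈ frontier Ω, (S x).im = 0) :
    (fun x => (S x).im) '' Ω = Set.Ioi (0 : ℝ) := by
  refine subset_antisymm (image_subset_iff.2 hpos) fun y (hy : 0 < y) => ?_
  have hImS : ContinuousOn (fun x => (S x).im) (closure Ω) :=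
    continuous_im.comp_continuousOn hScont
  have hacl : a ∈ closure Ω := frontier_subset_closure haΩ
  obtain ⟨_, hx₀y, x₀, hx₀, rfl⟩ := mem_closure_iff.1
    (((hImS a hacl).mono subset_closure).mem_closure_image hacl) (Iio y) isOpen_Iio
    (by simpa [hSa] using hy)
  have hF := isClosed_sep_le_of_eq_zero_on_frontier hImS hbd (hpos x₀ hx₀)
  have hQdeg : 0 < Q.degree := degree_pos_of_root (fun h => hQ x₀ hx₀ (by simp [h])) ha
  obtain ⟨m, hm, hmQ⟩ := exists_pos_le_norm_eval hQdeg hF fun x hx => hQ x hx.1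
  have hC : ∀ x ∈ Ω, (S x₀).im ≤ (S x).im → ‖sq x‖⁻¹ ≤ (√m)⁻¹ := fun x hx hx₀x =>
    inv_anti₀ (Real.sqrt_pos.2 hm) (Real.sqrt_le_iff.2
      ⟨norm_nonneg _, by simpa [← norm_pow, hsq x hx] using hmQ x ⟨hx, hx₀x⟩⟩)
  have hsq0 : ∀ x ∈ Ω, sq x ≠ 0 := fun x hx h =>
    hQ x hx (by rw [← hsq x hx, h, zero_pow two_ne_zero])
  obtain ⟨x, hx, hSx⟩ := exists_eq_add_mul_I hΩ hSd hsq0 hx₀ hF hC (sub_nonneg.2 hx₀y.le)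
  exact ⟨x, hx, by simp [hSx]⟩

/-- For a Stokes domain `Ω` of type (1) (`Im 𝔖_a > 0` on `Ω`,
`Im 𝔖_a = 0` on `∂Ω`), the set `{Im 𝔖_a(x) : x ∈ Ω}` equals `(0, +∞)`,
i.e. `μ = sup Im 𝔖_a = +∞`. -/
theorem stmt16 (Q : Polynomial ℂ) (a : ℂ) (ha : Q.eval a = 0)
    (sq S : ℂ → ℂ) (Ω : Set ℂ)
    (hΩ : IsOpen Ω) (hΩc : IsConnected Ω) (haΩ : a ∈ frontier Ω)
    (hQ : ∀ x ∈ Ω, Q.eval x ≠ 0)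
    (hsq : ∀ x ∈ Ω, sq x ^ 2 = Q.eval x)
    (hsqd : DifferentiableOn ℂ sq Ω)
    (hScont : ContinuousOn S (closure Ω))
    (hSd : ∀ x ∈ Ω, HasDerivAt S (sq x) x)
    (hSa : S a = 0)
    (hpos : ∀ x ∈ Ω, 0 < (S x).im)
    (hbd : ∀ x ∈ frontier Ω, (S x).im = 0) :
    (fun x => (S x).im) '' Ω = Set.Ioi (0 : ℝ) :=
  stmt16_general Q a ha sq S Ω hΩ haΩ hQ hsq hScont hSd hSa hpos hbd
end

section
/- Let Ω be a Stokes domain of type (1) with Im 𝔖_a > 0 on Ω and Im 𝔖_a = 0 on ∂Ω. Then z = 𝔖_a(x) is a conformal bijection from Ω onto the upper half-plane ℂ₊ = {z : Im z > 0}; its inverse Ψ is obtained by solving Ψ'(z) = 1/√(Q(Ψ(z))) globally on ℂ₊. -/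
/-!
`S` has nonvanishing derivative, so it is a local homeomorphism on `Ω`. Every segment in the
upper half-plane starting at `S x₀` lifts through `S` to a path in `Ω` starting at `x₀`: a lift
defined up to time `T` cannot escape to infinity, since `|S'| = |√Q| ≥ 1` far out bounds its speed
by that of the segment, and it cannot accumulate on `∂Ω`, where `Im S = 0`; so it accumulates at a
point of `Ω`, and the local inverse there continues it past `T`. Lifts are unique, and the lifts of
nearby segments stay together chart by chart, so the endpoint map `Ψ` is a continuous right inverse
of `S` on the half-plane, holomorphic with `Ψ' = 1 / S' ∘ Ψ`. Finally `Ψ ∘ S` and `id` are two lifts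
of `S` over the connected set `Ω` that agree at `x₀`, hence coincide.
-/

open Set Filter Topology Function Metric

section Lifting

variable {A X Y : Type*} [TopologicalSpace A] [TopologicalSpace X]
  {f : X → Y} {Ω : Set X} {γ : A → Y} {I J : Set A} {y y₁ y₂ : A → X}

structure IsLiftOn (f : X → Y) (Ω : Set X) (γ : A → Y) (I : Set A) (y : A → X) : Prop where
  continuousOn : ContinuousOn y I
  mapsTo : MapsTo y I Ω
  comp_eqOn : EqOn (f ∘ y) γ I

theorem IsLiftOn.mono (h : IsLiftOn f Ω γ I y) (hJ : J ⊆ I) : IsLiftOn f Ω γ J y :=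
  ⟨h.continuousOn.mono hJ, h.mapsTo.mono_left hJ, h.comp_eqOn.mono hJ⟩

theorem IsLiftOn.congr (h : IsLiftOn f Ω γ I y₁) (heq : EqOn y₂ y₁ I) : IsLiftOn f Ω γ I y₂ :=
  ⟨h.continuousOn.congr heq, fun _ ht => heq ht ▸ h.mapsTo ht,
    fun _ ht => (congrArg f (heq ht)).trans (h.comp_eqOn ht)⟩

theorem IsLiftOn.union (h₁ : IsLiftOn f Ω γ I y) (h₂ : IsLiftOn f Ω γ J y) (hI : IsClosed I)
    (hJ : IsClosed J) : IsLiftOn f Ω γ (I ∪ J) y :=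
  ⟨h₁.continuousOn.union_of_isClosed h₂.continuousOn hI hJ, h₁.mapsTo.union h₂.mapsTo,
    h₁.comp_eqOn.union h₂.comp_eqOn⟩

theorem IsLocalHomeomorphOn.exists_source_subset [TopologicalSpace Y]
    (hf : IsLocalHomeomorphOn f Ω) (hΩ : IsOpen Ω) {x : X} (hx : x ∈ Ω) :
    ∃ e : OpenPartialHomeomorph X Y, x ∈ e.source ∧ e.source ⊆ Ω ∧ f = e := by
  obtain ⟨e, hxe, rfl⟩ := hf x hx
  exact ⟨e.restrOpen Ω hΩ, by simp [hxe, hx], by simp, rfl⟩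

theorem OpenPartialHomeomorph.isLiftOn_symm_comp [TopologicalSpace Y]
    (e : OpenPartialHomeomorph X Y) (he : e.source ⊆ Ω) (hfe : f = e)
    (hγ : ContinuousOn γ I) (hγe : MapsTo γ I e.target) : IsLiftOn f Ω γ I (e.symm ∘ γ) :=
  ⟨e.continuousOn_symm.comp hγ hγe, fun _ ht => he (e.map_target (hγe ht)),
    fun _ ht => hfe ▸ e.right_inv (hγe ht)⟩

theorem IsLiftOn.eqOn [TopologicalSpace Y] [T2Space X] (hf : IsLocalHomeomorphOn f Ω)
    (hI : IsPreconnected I) (h₁ : IsLiftOn f Ω γ I y₁) (h₂ : IsLiftOn f Ω γ I y₂) {a : A}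
    (ha : a ∈ I) (h : y₁ a = y₂ a) : EqOn y₁ y₂ I := by
  intro t ht
  -- Near a point where they agree the lifts agree by local injectivity of `f`; near a point
  -- where they differ they differ by continuity.
  refine (hI.induction₂' (fun t t' => (y₁ t = y₂ t ↔ y₁ t' = y₂ t')) (fun t ht => ?_)
    (fun _ _ _ _ _ _ => Iff.trans) ha ht).mp h
  suffices ∀ᶠ t' in 𝓝[I] t, (y₁ t = y₂ t ↔ y₁ t' = y₂ t') from
    this.mono fun t' h => ⟨h, h.symm⟩
  by_cases heq : y₁ t = y₂ t
  · obtain ⟨e, hte, hfe⟩ := hf _ (h₁.mapsTo ht)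
    filter_upwards [(h₁.continuousOn t ht).eventually_mem (e.open_source.mem_nhds hte),
      (h₂.continuousOn t ht).eventually_mem (e.open_source.mem_nhds (heq ▸ hte)),
      self_mem_nhdsWithin] with t' h₁t' h₂t' ht'
    refine iff_of_true heq (e.injOn h₁t' h₂t' ?_)
    rw [← hfe]
    exact (h₁.comp_eqOn ht').trans (h₂.comp_eqOn ht').symm
  · have hne : ∀ᶠ t' in 𝓝[I] t, (y₁ t', y₂ t') ∈ (diagonal X)ᶜ :=
      ((h₁.continuousOn t ht).prodMk (h₂.continuousOn t ht)).eventually_mem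
        (isClosed_diagonal.isOpen_compl.mem_nhds heq)
    exact hne.mono fun t' ht' => iff_of_false heq ht'

theorem IsLocalHomeomorphOn.leftInvOn [TopologicalSpace Y] [T2Space X] {V : Set Y} {Φ : Y → X}
    (hf : IsLocalHomeomorphOn f Ω) (hΩ : IsPreconnected Ω) (hfΩ : MapsTo f Ω V)
    (hΦ : MapsTo Φ V Ω) (hfΦ : RightInvOn Φ f V) (hΦc : ContinuousOn Φ V) {x₀ : X}
    (hx₀ : x₀ ∈ Ω) (h : Φ (f x₀) = x₀) : LeftInvOn Φ f Ω :=
  IsLiftOn.eqOn hf hΩ (γ := f)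
    ⟨hΦc.comp hf.continuousOn hfΩ, hΦ.comp hfΩ, fun _ hx => hfΦ (hfΩ hx)⟩
    ⟨continuousOn_id, mapsTo_id _, fun _ _ => rfl⟩ hx₀ h

end Lifting

section RealLifts

variable {X Y : Type*} [TopologicalSpace X] {f : X → Y} {Ω : Set X} {γ : ℝ → Y}

theorem IsLiftOn.glue {y₁ y₂ : ℝ → X} {a b c : ℝ} (hab : a ≤ b) (hbc : b ≤ c)
    (h₁ : IsLiftOn f Ω γ (Icc a b) y₁) (h₂ : IsLiftOn f Ω γ (Icc b c) y₂) (h : y₁ b = y₂ b) :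
    IsLiftOn f Ω γ (Icc a c) (fun t => if t ≤ b then y₁ t else y₂ t) := by
  rw [← Icc_union_Icc_eq_Icc hab hbc]
  refine IsLiftOn.union (h₁.congr fun t ht => if_pos ht.2) (h₂.congr fun t ht => ?_)
    isClosed_Icc isClosed_Icc
  rcases ht.1.eq_or_lt with rfl | hbt
  · exact if_pos le_rfl |>.trans h
  · exact if_neg hbt.not_ge

theorem exists_isLiftOn_extend [TopologicalSpace Y] (hf : IsLocalHomeomorphOn f Ω)
    (hΩ : IsOpen Ω) (hγ : Continuous γ) {T : ℝ} {p : X} (hp : p ∈ Ω) (hpT : f p = γ T) :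
    ∃ U ∈ 𝓝 p, ∃ l < T, ∃ u > T, ∀ a t₀ (y : ℝ → X), a ≤ t₀ → t₀ ∈ Ioc l T →
      IsLiftOn f Ω γ (Icc a t₀) y → y t₀ ∈ U →
      ∃ y' : ℝ → X, IsLiftOn f Ω γ (Icc a u) y' ∧ y' a = y a := by
  obtain ⟨e, hpe, heΩ, rfl⟩ := hf.exists_source_subset hΩ hp
  have hT : γ ⁻¹' e.target ∈ 𝓝 T :=
    hγ.continuousAt.preimage_mem_nhds (e.open_target.mem_nhds (hpT ▸ e.map_source hpe))
  obtain ⟨l, u, ⟨hlT, hTu⟩, hsub⟩ := mem_nhds_iff_exists_Ioo_subset.1 hT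
  refine ⟨e.source, e.open_source.mem_nhds hpe, l, hlT, (T + u) / 2, by linarith,
    fun a t₀ y hat₀ ht₀ hy hyU => ?_⟩
  have hchart : IsLiftOn e Ω γ (Icc t₀ ((T + u) / 2)) (e.symm ∘ γ) :=
    e.isLiftOn_symm_comp heΩ rfl hγ.continuousOn fun t ht =>
      hsub ⟨by linarith [ht.1, ht₀.1], by linarith [ht.2]⟩
  have hmatch : y t₀ = e.symm (γ t₀) := by
    rw [← hy.comp_eqOn (right_mem_Icc.2 hat₀), comp_apply, e.left_inv hyU]
  exact ⟨_, hy.glue hat₀ (by linarith [ht₀.2]) hchart hmatch, if_pos hat₀⟩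

section Parametric

variable [TopologicalSpace Y] [T2Space X] {W : Type*} [TopologicalSpace W] {Γ : W → ℝ → Y}
  {F : W → ℝ → X} {I : Set ℝ} {w : W}

theorem eventually_continuousAt_lift_apply_iff (hf : IsLocalHomeomorphOn f Ω) (hΩ : IsOpen Ω)
    (hΓ : Continuous (uncurry Γ)) (hI : I.OrdConnected)
    (hF : ∀ᶠ w' in 𝓝 w, IsLiftOn f Ω (Γ w') I (F w')) {t : ℝ} (ht : t ∈ I) :
    ∀ᶠ t' in 𝓝[I] t, (ContinuousAt (F · t) w ↔ ContinuousAt (F · t') w) := by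
  obtain ⟨e, hte, heΩ, rfl⟩ := hf.exists_source_subset hΩ (hF.self_of_nhds.mapsTo ht)
  have hΓt : Γ w t ∈ e.target := hF.self_of_nhds.comp_eqOn ht ▸ e.map_source hte
  obtain ⟨N, hN, V, hV, hNV⟩ := mem_nhds_prod_iff.1
    (hΓ.continuousAt.preimage_mem_nhds (e.open_target.mem_nhds hΓt))
  obtain ⟨l, u, hlu, hsub⟩ := mem_nhds_iff_exists_Ioo_subset.1 hV
  have hΓe : ∀ w' ∈ N, ∀ τ ∈ Ioo l u, Γ w' τ ∈ e.target := fun w' hw' τ hτ =>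
    hNV (mk_mem_prod hw' (hsub hτ))
  have key : ∀ t₁ ∈ I ∩ Ioo l u, ∀ t₂ ∈ I ∩ Ioo l u, F w t₁ ∈ e.source →
      ContinuousAt (F · t₁) w → ContinuousAt (F · t₂) w := by
    intro t₁ ht₁ t₂ ht₂ hsrc hc
    have hK := (hI.inter ordConnected_Ioo).uIcc_subset ht₁ ht₂
    have heq : ∀ᶠ w' in 𝓝 w, e.symm (Γ w' t₂) = F w' t₂ := by
      filter_upwards [hF, hN, hc.eventually_mem (e.open_source.mem_nhds hsrc)]
        with w' hw' hw'N hw'src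
      have hchart : IsLiftOn e Ω (Γ w') (uIcc t₁ t₂) (e.symm ∘ Γ w') :=
        e.isLiftOn_symm_comp heΩ rfl (hΓ.uncurry_left w').continuousOn fun τ hτ =>
          hΓe w' hw'N τ (hK hτ).2
      refine hchart.eqOn hf isPreconnected_uIcc (hw'.mono (hK.trans inter_subset_left))
        left_mem_uIcc ?_ right_mem_uIcc
      rw [comp_apply, ← hw'.comp_eqOn ht₁.1, comp_apply, e.left_inv hw'src]
    exact ((e.continuousAt_symm (hΓe w (mem_of_mem_nhds hN) t₂ ht₂.2)).comp (f := (Γ · t₂))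
      (hΓ.uncurry_right t₂).continuousAt).congr heq
  filter_upwards [nhdsWithin_le_nhds (Ioo_mem_nhds hlu.1 hlu.2), self_mem_nhdsWithin,
    (hF.self_of_nhds.continuousOn t ht).eventually_mem (e.open_source.mem_nhds hte)]
    with t' ht'lu ht'I ht'src
  exact ⟨key t ⟨ht, hlu⟩ t' ⟨ht'I, ht'lu⟩ hte, key t' ⟨ht'I, ht'lu⟩ t ⟨ht, hlu⟩ ht'src⟩

theorem continuousAt_lift_apply (hf : IsLocalHomeomorphOn f Ω) (hΩ : IsOpen Ω)
    (hΓ : Continuous (uncurry Γ)) (hI : I.OrdConnected)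
    (hF : ∀ᶠ w' in 𝓝 w, IsLiftOn f Ω (Γ w') I (F w')) {s t : ℝ} (hs : s ∈ I) (ht : t ∈ I)
    (h : ContinuousAt (F · s) w) : ContinuousAt (F · t) w :=
  hI.isPreconnected.induction₂' (fun s t => ContinuousAt (F · s) w → ContinuousAt (F · t) w)
    (fun _ ht => (eventually_continuousAt_lift_apply_iff hf hΩ hΓ hI hF ht).mono
      fun _ h => ⟨h.mp, h.mpr⟩)
    (fun _ _ _ _ _ _ h h' => h' ∘ h) hs ht h

end Parametric

theorem exists_continuousOn_rightInvOn [TopologicalSpace Y] [T2Space X] {Γ : Y → ℝ → Y}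
    (hf : IsLocalHomeomorphOn f Ω) (hΩ : IsOpen Ω) (hΓ : Continuous (uncurry Γ))
    (hΓ₁ : ∀ w, Γ w 1 = w) {V : Set Y} (hV : IsOpen V) {x₀ : X} (hx₀ : x₀ ∈ Ω)
    (hfx₀ : f x₀ ∈ V) (hΓx₀ : ∀ t, Γ (f x₀) t = f x₀)
    (hlift : ∀ w ∈ V, ∃ y : ℝ → X, IsLiftOn f Ω (Γ w) (Icc 0 1) y ∧ y 0 = x₀) :
    ∃ Φ : Y → X, MapsTo Φ V Ω ∧ RightInvOn Φ f V ∧ ContinuousOn Φ V ∧ Φ (f x₀) = x₀ := by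
  have : Nonempty X := ⟨x₀⟩
  choose! F hF hF₀ using hlift
  have h₀ : (0 : ℝ) ∈ Icc 0 1 := left_mem_Icc.2 zero_le_one
  have h₁ : (1 : ℝ) ∈ Icc 0 1 := right_mem_Icc.2 zero_le_one
  have hconst : IsLiftOn f Ω (Γ (f x₀)) (Icc 0 1) fun _ => x₀ :=
    ⟨continuousOn_const, fun _ _ => hx₀, fun t _ => (hΓx₀ t).symm⟩
  refine ⟨(F · 1), fun w hw => (hF w hw).mapsTo h₁,
    fun w hw => ((hF w hw).comp_eqOn h₁).trans (hΓ₁ w), fun w hw => ?_,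
    (hF _ hfx₀).eqOn hf isPreconnected_Icc hconst h₀ (hF₀ _ hfx₀) h₁⟩
  have hFw : ∀ᶠ w' in 𝓝 w, w' ∈ V := hV.mem_nhds hw
  exact (continuousAt_lift_apply hf hΩ hΓ ordConnected_Icc (hFw.mono hF) h₀ h₁
    (continuousAt_const.congr (hFw.mono fun w' hw' => (hF₀ w' hw').symm))).continuousWithinAt

end RealLifts

section Complex

variable {f f' : ℂ → ℂ} {Ω : Set ℂ}

theorem isLocalHomeomorphOn_of_hasDerivAt (hΩ : IsOpen Ω)
    (hf : ∀ x ∈ Ω, HasDerivAt f (f' x) x) (hf' : ∀ x ∈ Ω, f' x ≠ 0) :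
    IsLocalHomeomorphOn f Ω := by
  intro x hx
  have hd : DifferentiableOn ℂ f Ω := fun x hx =>
    (hf x hx).differentiableAt.differentiableWithinAt
  have hs : HasStrictDerivAt f (f' x) x := by
    simpa [(hf x hx).deriv] using
      ((hd.analyticAt (hΩ.mem_nhds hx)).contDiffAt (n := 1)).hasStrictDerivAt one_ne_zero
  exact ⟨_, (hs.hasStrictFDerivAt_equiv (hf' x hx)).mem_toOpenPartialHomeomorph_source, by simp⟩

theorem IsLiftOn.hasDerivWithinAt {γ y : ℝ → ℂ} {I : Set ℝ} {t : ℝ} {γ' d : ℂ}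
    (hloc : IsLocalHomeomorphOn f Ω) (hΩ : IsOpen Ω) (hy : IsLiftOn f Ω γ I y) (ht : t ∈ I)
    (hγ : HasDerivWithinAt γ γ' I t) (hf : HasDerivAt f d (y t)) (hd : d ≠ 0) :
    HasDerivWithinAt y (d⁻¹ * γ') I t := by
  obtain ⟨e, hte, heΩ, rfl⟩ := hloc.exists_source_subset hΩ (hy.mapsTo ht)
  have hγt : γ t = e (y t) := (hy.comp_eqOn ht).symm
  have hsymm : HasDerivAt e.symm d⁻¹ (γ t) :=
    e.hasDerivAt_symm (hγt ▸ e.map_source hte) hd (by rwa [hγt, e.left_inv hte])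
  refine (hsymm.comp_hasDerivWithinAt t hγ).congr_of_eventuallyEq ?_ (by
    rw [comp_apply, hγt, e.left_inv hte])
  filter_upwards [(hy.continuousOn t ht).eventually_mem (e.open_source.mem_nhds hte),
    self_mem_nhdsWithin] with τ hτ hτI
  rw [comp_apply, ← hy.comp_eqOn hτI, comp_apply, e.left_inv hτ]

theorem IsLiftOn.norm_le (hΩ : IsOpen Ω) (hf : ∀ x ∈ Ω, HasDerivAt f (f' x) x)
    (hf' : ∀ x ∈ Ω, f' x ≠ 0) {R : ℝ} (hR : ∀ x ∈ Ω, R ≤ ‖x‖ → 1 ≤ ‖f' x‖) {γ γ' : ℝ → ℂ}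
    (hγ : ∀ t, HasDerivAt γ (γ' t) t) {K b : ℝ} (hK : ∀ t ∈ Icc 0 b, ‖γ' t‖ ≤ K)
    {y : ℝ → ℂ} (hy : IsLiftOn f Ω γ (Icc 0 b) y) {t : ℝ} (ht : t ∈ Icc 0 b) :
    ‖y t‖ ≤ max ‖y 0‖ R + 1 + (K + 1) * t := by
  have hloc := isLocalHomeomorphOn_of_hasDerivAt hΩ hf hf'
  refine image_norm_le_of_norm_deriv_right_lt_deriv_boundary
    (f' := fun s => (f' (y s))⁻¹ * γ' s) (B := fun s => max ‖y 0‖ R + 1 + (K + 1) * s)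
    (B' := fun _ => K + 1) hy.continuousOn (fun s hs => ?_) ?_
    (fun s => (((hasDerivAt_id' s).const_mul (K + 1)).const_add _).congr_deriv (mul_one _))
    (fun s hs hys => ?_) ht
  · have hs' := Ico_subset_Icc_self hs
    exact (hy.hasDerivWithinAt hloc hΩ hs' (hγ s).hasDerivWithinAt (hf _ (hy.mapsTo hs'))
      (hf' _ (hy.mapsTo hs'))).mono_of_mem_nhdsWithin (Icc_mem_nhdsGE_of_mem hs)
  · simp only [mul_zero, add_zero]
    linarith [le_max_left ‖y 0‖ R]
  · have hs' := Ico_subset_Icc_self hs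
    have hK0 : 0 ≤ K := (norm_nonneg _).trans (hK s hs')
    have h1 : 1 ≤ ‖f' (y s)‖ :=
      hR _ (hy.mapsTo hs') (by rw [hys]; nlinarith [le_max_right ‖y 0‖ R, hs.1])
    rw [norm_mul, norm_inv]
    calc ‖f' (y s)‖⁻¹ * ‖γ' s‖ ≤ 1 * K :=
          mul_le_mul (inv_le_one_of_one_le₀ h1) (hK s hs') (norm_nonneg _) zero_le_one
      _ < K + 1 := by linarith

theorem exists_clusterPt_lift_endpoint (hΩ : IsOpen Ω) (hf : ∀ x ∈ Ω, HasDerivAt f (f' x) x)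
    (hf' : ∀ x ∈ Ω, f' x ≠ 0) (hfc : ContinuousOn f (closure Ω)) {R : ℝ}
    (hR : ∀ x ∈ Ω, R ≤ ‖x‖ → 1 ≤ ‖f' x‖) {γ γ' : ℝ → ℂ} (hγ : ∀ t, HasDerivAt γ (γ' t) t)
    {K : ℝ} (hK : ∀ t ∈ Icc 0 1, ‖γ' t‖ ≤ K) {x₀ : ℂ} {T : ℝ} (hT₀ : 0 < T) (hT₁ : T ≤ 1)
    (hγT : ∀ x ∈ frontier Ω, f x ≠ γ T)
    (hlift : ∀ t ∈ Ico 0 T, ∃ y, IsLiftOn f Ω γ (Icc 0 t) y ∧ y 0 = x₀) :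
    ∃ p ∈ Ω, f p = γ T ∧ ∀ U ∈ 𝓝 p, ∃ᶠ t in 𝓝[<] T,
      0 ≤ t ∧ ∃ y, IsLiftOn f Ω γ (Icc 0 t) y ∧ y 0 = x₀ ∧ y t ∈ U := by
  choose! Y hY hY₀ using hlift
  have hev : ∀ᶠ t in 𝓝[<] T, t ∈ Ico 0 T := Ico_mem_nhdsLT hT₀
  have hK₀ : 0 ≤ K := (norm_nonneg _).trans (hK 0 (left_mem_Icc.2 zero_le_one))
  have hbdd : ∀ t ∈ Ico 0 T, Y t t ∈ closedBall 0 (max ‖x₀‖ R + 1 + (K + 1)) := fun t ht => by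
    have := (hY t ht).norm_le hΩ hf hf' hR hγ
      (fun s hs => hK s ⟨hs.1, hs.2.trans (ht.2.le.trans hT₁)⟩) (right_mem_Icc.2 ht.1)
    rw [hY₀ t ht] at this
    rw [mem_closedBall_zero_iff]
    nlinarith [ht.2]
  obtain ⟨p, -, hp⟩ := (isCompact_closedBall _ _).exists_mapClusterPt
    (tendsto_principal.2 (hev.mono hbdd))
  have hΩev : ∀ᶠ t in 𝓝[<] T, Y t t ∈ Ω :=
    hev.mono fun t ht => (hY t ht).mapsTo (right_mem_Icc.2 ht.1)
  have hpΩ : p ∈ closure Ω :=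
    isClosed_closure.mem_of_mapClusterPt hp (hΩev.mono fun _ h => subset_closure h)
  have hfp : f p = γ T := by
    have h₁ : MapClusterPt (f p) (𝓝[<] T) (f ∘ fun t => Y t t) :=
      hp.tendsto_comp' ((hfc p hpΩ).mono_left (inf_le_inf_left _
        (tendsto_principal.2 (hΩev.mono fun _ h => subset_closure h))))
    have h₂ : MapClusterPt (f p) (𝓝[<] T) γ :=
      (EventuallyEq.mapClusterPt_iff (hev.mono fun t ht =>
        (hY t ht).comp_eqOn (right_mem_Icc.2 ht.1))).1 h₁
    by_contra hne
    exact (h₂.clusterPt.mono ((hγ T).continuousAt.tendsto.mono_left nhdsWithin_le_nhds)).ne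
      (disjoint_nhds_nhds.2 hne).eq_bot
  refine ⟨p, by_contra fun h => hγT p ⟨hpΩ, by rwa [hΩ.interior_eq]⟩ hfp, hfp, fun U hU => ?_⟩
  exact ((mapClusterPt_iff_frequently.1 hp U hU).and_eventually hev).mono
    fun t ⟨htU, ht⟩ => ⟨ht.1, Y t, hY t ht, hY₀ t ht, htU⟩

theorem exists_isLiftOn_of_hasDerivAt (hΩ : IsOpen Ω) (hf : ∀ x ∈ Ω, HasDerivAt f (f' x) x)
    (hf' : ∀ x ∈ Ω, f' x ≠ 0) (hfc : ContinuousOn f (closure Ω)) {R : ℝ}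
    (hR : ∀ x ∈ Ω, R ≤ ‖x‖ → 1 ≤ ‖f' x‖) {γ γ' : ℝ → ℂ} (hγ : ∀ t, HasDerivAt γ (γ' t) t)
    {K : ℝ} (hK : ∀ t ∈ Icc 0 1, ‖γ' t‖ ≤ K) (hγΩ : ∀ t ∈ Icc 0 1, ∀ x ∈ frontier Ω, f x ≠ γ t)
    {x₀ : ℂ} (hx₀ : x₀ ∈ Ω) (hfx₀ : f x₀ = γ 0) :
    ∃ y, IsLiftOn f Ω γ (Icc 0 1) y ∧ y 0 = x₀ := by
  -- `T = sup G`; the local inverse at a point over `γ T` approached by lifts continues them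
  -- past `T`, which forces `T = 1 ∈ G`.
  set G := {t ∈ Icc (0 : ℝ) 1 | ∃ y, IsLiftOn f Ω γ (Icc 0 t) y ∧ y 0 = x₀}
  have hG₀ : 0 ∈ G := ⟨left_mem_Icc.2 zero_le_one, fun _ => x₀,
    ⟨continuousOn_const, fun _ _ => hx₀, fun t ht => by rw [Icc_self] at ht; rw [ht]; exact hfx₀⟩,
    rfl⟩
  have hGbdd : BddAbove G := ⟨1, fun t ht => ht.1.2⟩
  set T := sSup G
  have hT₀ : 0 ≤ T := le_csSup hGbdd hG₀
  have hT₁ : T ≤ 1 := csSup_le ⟨0, hG₀⟩ fun t ht => ht.1.2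
  obtain ⟨p, hpΩ, hpT, hreach⟩ : ∃ p ∈ Ω, f p = γ T ∧ ∀ U ∈ 𝓝 p, ∀ l < T, ∃ t₀ ∈ Ioc l T,
      0 ≤ t₀ ∧ ∃ y, IsLiftOn f Ω γ (Icc 0 t₀) y ∧ y 0 = x₀ ∧ y t₀ ∈ U := by
    by_cases hTG : T ∈ G
    · obtain ⟨-, y, hy, hy₀⟩ := hTG
      exact ⟨y T, hy.mapsTo (right_mem_Icc.2 hT₀), hy.comp_eqOn (right_mem_Icc.2 hT₀),
        fun U hU l hl => ⟨T, ⟨hl, le_rfl⟩, hT₀, y, hy, hy₀, mem_of_mem_nhds hU⟩⟩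
    have hlift : ∀ t ∈ Ico 0 T, ∃ y, IsLiftOn f Ω γ (Icc 0 t) y ∧ y 0 = x₀ := fun t ht => by
      obtain ⟨s, ⟨-, y, hy, hy₀⟩, hts⟩ := exists_lt_of_lt_csSup ⟨0, hG₀⟩ ht.2
      exact ⟨y, hy.mono (Icc_subset_Icc le_rfl hts.le), hy₀⟩
    obtain ⟨p, hpΩ, hpT, hp⟩ := exists_clusterPt_lift_endpoint hΩ hf hf' hfc hR hγ hK
      (hT₀.lt_of_ne fun h => hTG (h ▸ hG₀)) hT₁ (hγΩ T ⟨hT₀, hT₁⟩) hlift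
    refine ⟨p, hpΩ, hpT, fun U hU l hl => ?_⟩
    obtain ⟨t₀, ht₀, hlT⟩ := ((hp U hU).and_eventually (Ioo_mem_nhdsLT hl)).exists
    exact ⟨t₀, Ioo_subset_Ioc_self hlT, ht₀⟩
  obtain ⟨U, hU, l, hl, u, hu, hext⟩ := exists_isLiftOn_extend
    (isLocalHomeomorphOn_of_hasDerivAt hΩ hf hf')
    hΩ (continuous_iff_continuousAt.2 fun t => (hγ t).continuousAt) hpΩ hpT
  obtain ⟨t₀, ht₀, h₀t₀, y, hy, hy₀, hyU⟩ := hreach U hU l hl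
  obtain ⟨y', hy', hy'₀⟩ := hext 0 t₀ y h₀t₀ ht₀ hy hyU
  have hu₁ : min u 1 ∈ G := ⟨⟨le_min (by linarith) zero_le_one, min_le_right _ _⟩, y',
    hy'.mono (Icc_subset_Icc le_rfl (min_le_left _ _)), hy'₀.trans hy₀⟩
  have hu : 1 < u := not_le.1 fun h => (min_eq_left h ▸ le_csSup hGbdd hu₁).not_gt hu
  exact (min_eq_right hu.le ▸ hu₁).2

theorem exists_isLiftOn_segment (hΩ : IsOpen Ω) (hf : ∀ x ∈ Ω, HasDerivAt f (f' x) x)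
    (hf' : ∀ x ∈ Ω, f' x ≠ 0) (hfc : ContinuousOn f (closure Ω)) {R : ℝ}
    (hR : ∀ x ∈ Ω, R ≤ ‖x‖ → 1 ≤ ‖f' x‖) (hpos : ∀ x ∈ Ω, 0 < (f x).im)
    (hbd : ∀ x ∈ frontier Ω, (f x).im = 0) {x₀ w : ℂ} (hx₀ : x₀ ∈ Ω) (hw : 0 < w.im) :
    ∃ y, IsLiftOn f Ω (fun t : ℝ => f x₀ + t * (w - f x₀)) (Icc 0 1) y ∧ y 0 = x₀ := by
  have hγ (t : ℝ) : HasDerivAt (fun t : ℝ => f x₀ + t * (w - f x₀)) (w - f x₀) t := by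
    simpa using ((hasDerivAt_id t).ofReal_comp.mul_const (w - f x₀)).const_add (f x₀)
  refine exists_isLiftOn_of_hasDerivAt hΩ hf hf' hfc hR hγ (K := ‖w - f x₀‖) (fun _ _ => le_rfl)
    (fun t ht x hx h => ?_) hx₀ (by simp)
  have := congrArg Complex.im h
  simp only [hbd x hx, Complex.add_im, Complex.mul_im, Complex.ofReal_re, Complex.ofReal_im,
    Complex.sub_im, Complex.sub_re, zero_mul, add_zero] at this
  have hm : 0 < min (f x₀).im w.im := lt_min (hpos x₀ hx₀) hw
  nlinarith [mul_le_mul_of_nonneg_left (min_le_left (f x₀).im w.im) (sub_nonneg.2 ht.2),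
    mul_le_mul_of_nonneg_left (min_le_right (f x₀).im w.im) ht.1]

end Complex

theorem Polynomial.exists_one_le_norm_of_sq_eq_eval {Q : Polynomial ℂ} {a b : ℂ}
    (ha : Q.eval a = 0) (hb : Q.eval b ≠ 0) {Ω : Set ℂ} {g : ℂ → ℂ}
    (hg : ∀ x ∈ Ω, g x ^ 2 = Q.eval x) : ∃ R : ℝ, ∀ x ∈ Ω, R ≤ ‖x‖ → 1 ≤ ‖g x‖ := by
  have hdeg : 0 < Q.degree := by
    by_contra! h
    rw [Q.eq_C_of_degree_le_zero h, eval_C] at ha hb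
    exact hb ha
  obtain ⟨R, hR⟩ := eventually_atTop.1 (eventually_comap.1
    ((Q.tendsto_norm_atTop hdeg tendsto_comap).eventually_ge_atTop 1))
  refine ⟨R, fun x hx hxR => ?_⟩
  have := hR ‖x‖ hxR x rfl
  rw [← hg x hx, norm_pow] at this
  nlinarith [norm_nonneg (g x)]

theorem stmt18_general (Q : Polynomial ℂ) (a : ℂ) (ha : Q.eval a = 0)
    (sq S : ℂ → ℂ) (Ω : Set ℂ)
    (hΩ : IsOpen Ω) (hΩc : IsConnected Ω)
    (hQ : ∀ x ∈ Ω, Q.eval x ≠ 0)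
    (hsqne : ∀ x ∈ Ω, sq x ≠ 0)
    (hsq : ∀ x ∈ Ω, sq x ^ 2 = Q.eval x)
    (hScont : ContinuousOn S (closure Ω))
    (hSd : ∀ x ∈ Ω, HasDerivAt S (sq x) x)
    (hpos : ∀ x ∈ Ω, 0 < (S x).im)
    (hbd : ∀ x ∈ frontier Ω, (S x).im = 0) :
    Set.BijOn S Ω {z : ℂ | 0 < z.im} ∧ DifferentiableOn ℂ S Ω ∧
    ∃ Ψ : ℂ → ℂ, (∀ z : ℂ, 0 < z.im → Ψ z ∈ Ω ∧ S (Ψ z) = z ∧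
        HasDerivAt Ψ (1 / sq (Ψ z)) z) ∧
      ∀ x ∈ Ω, Ψ (S x) = x := by
  obtain ⟨x₀, hx₀⟩ := hΩc.nonempty
  have hloc := isLocalHomeomorphOn_of_hasDerivAt hΩ hSd hsqne
  have hmaps : MapsTo S Ω {z : ℂ | 0 < z.im} := hpos
  have hH : IsOpen {z : ℂ | 0 < z.im} := isOpen_lt continuous_const Complex.continuous_im
  obtain ⟨R, hR⟩ := Q.exists_one_le_norm_of_sq_eq_eval ha (hQ x₀ hx₀) hsq
  obtain ⟨Ψ, hΨΩ, hSΨ, hΨc, hΨx₀⟩ := exists_continuousOn_rightInvOn hloc hΩ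
    (Γ := fun w (t : ℝ) => S x₀ + t * (w - S x₀)) (by fun_prop) (fun w => by simp) hH hx₀
    (hpos x₀ hx₀) (fun t => by simp)
    (fun w hw => exists_isLiftOn_segment hΩ hSd hsqne hScont hR hpos hbd hx₀ hw)
  have hinv : InvOn Ψ S Ω {z | 0 < z.im} :=
    ⟨hloc.leftInvOn hΩc.isPreconnected hmaps hΨΩ hSΨ hΨc hx₀ hΨx₀, hSΨ⟩
  refine ⟨hinv.bijOn hmaps hΨΩ, fun x hx => (hSd x hx).differentiableAt.differentiableWithinAt,
    Ψ, fun z hz => ⟨hΨΩ hz, hSΨ hz, ?_⟩, hinv.1⟩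
  rw [one_div]
  exact (hSd _ (hΨΩ hz)).of_local_left_inverse (hΨc.continuousAt (hH.mem_nhds hz))
    (hsqne _ (hΨΩ hz)) (eventually_of_mem (hH.mem_nhds hz) hSΨ)

/-- For a Stokes domain `Ω` of type (1) (`Im 𝔖_a > 0` on `Ω`,
`Im 𝔖_a = 0` on `∂Ω`), the map `z = 𝔖_a(x)` is a conformal (holomorphic)
bijection of `Ω` onto the upper half-plane `ℂ₊`, whose inverse `Ψ` solves
`Ψ'(z) = 1/√Q(Ψ(z))` globally on `ℂ₊`. -/
theorem stmt18 (Q : Polynomial ℂ) (a : ℂ) (ha : Q.eval a = 0)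
    (sq S : ℂ → ℂ) (Ω : Set ℂ)
    (hΩ : IsOpen Ω) (hΩc : IsConnected Ω) (haΩ : a ∈ frontier Ω)
    (hQ : ∀ x ∈ Ω, Q.eval x ≠ 0)
    (hsqne : ∀ x ∈ Ω, sq x ≠ 0)
    (hsq : ∀ x ∈ Ω, sq x ^ 2 = Q.eval x)
    (hsqd : DifferentiableOn ℂ sq Ω)
    (hScont : ContinuousOn S (closure Ω))
    (hSd : ∀ x ∈ Ω, HasDerivAt S (sq x) x)
    (hSa : S a = 0)
    (hpos : ∀ x ∈ Ω, 0 < (S x).im)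
    (hbd : ∀ x ∈ frontier Ω, (S x).im = 0) :
    Set.BijOn S Ω {z : ℂ | 0 < z.im} ∧ DifferentiableOn ℂ S Ω ∧
    ∃ Ψ : ℂ → ℂ, (∀ z : ℂ, 0 < z.im → Ψ z ∈ Ω ∧ S (Ψ z) = z ∧
        HasDerivAt Ψ (1 / sq (Ψ z)) z) ∧
      ∀ x ∈ Ω, Ψ (S x) = x :=
  stmt18_general Q a ha sq S Ω hΩ hΩc hQ hsqne hsq hScont hSd hpos hbd
end
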